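/- For every ω-word w accepted by a deterministic Muller automaton M, there exists an ultimately periodic word u v^ω accepted by M such that the run of M on u v^ω has the same infinity set as the run on w; in particular every nonempty DMA-recognizable language contains an ultimately periodic word. -/

import Mathlib

namespace OmegaRC

variable {σ : Type*} {Q : Type*}

/-- Concatenation of a finite word with an ω-word. -/
def wcat (x : List σ) (w : ℕ → σ) : ℕ → σ :=
  fun n => if h : n < x.length then x.get ⟨n, h⟩ else w (n - x.length)

/-- Canonical right congruence of an ω-language: `x ∼_L y`. -/
def RC (L : Set (ℕ → σ)) (x y : List σ) : Prop :=
  ∀ w : ℕ → σ, wcat x w ∈ L ↔ wcat y w ∈ L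

/-- The periodic ω-word `v^ω` (for nonempty `v`). -/
def wrep [Inhabited σ] (v : List σ) : ℕ → σ :=
  fun n => v.getD (n % v.length) default

/-- Finite power `v^n` of a finite word. -/
def wpow (v : List σ) (n : ℕ) : List σ := (List.replicate n v).flatten

/-- The finite segment `w[i..j)` of an ω-word. -/
def segment (w : ℕ → σ) (i j : ℕ) : List σ :=
  (List.range (j - i)).map (fun k => w (i + k))

/-- `R^ω`: ω-words that are infinite concatenations of (nonempty) words of `R`. -/
def omegaPow (R : Set (List σ)) : Set (ℕ → σ) :=
  { w | ∃ f : ℕ → ℕ, f 0 = 0 ∧ StrictMono f ∧ ∀ i, segment w (f i) (f (i + 1)) ∈ R }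

/-- A complete deterministic transition structure. -/
structure DetAut (σ : Type*) (Q : Type*) where
  init : Q
  step : Q → σ → Q

/-- Extended transition function on finite words. -/
def DetAut.runFin (A : DetAut σ Q) (q : Q) (x : List σ) : Q := x.foldl A.step q

/-- The run of a deterministic automaton on an ω-word. -/
def DetAut.run (A : DetAut σ Q) (w : ℕ → σ) : ℕ → Q
  | 0 => A.init
  | n + 1 => A.step (A.run w n) (w n)

/-- The set of states occurring infinitely often in a run. -/
def infSet (r : ℕ → Q) : Set Q := { q | ∀ n, ∃ m, n ≤ m ∧ r m = q }

/-- Muller acceptance. -/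
def MullerAcc (A : DetAut σ Q) (acc : Set (Set Q)) (w : ℕ → σ) : Prop :=
  infSet (A.run w) ∈ acc

/-- Büchi acceptance. -/
def BuchiAcc (A : DetAut σ Q) (F : Set Q) (w : ℕ → σ) : Prop :=
  ∀ n, ∃ m, n ≤ m ∧ A.run w m ∈ F

/-- co-Büchi acceptance. -/
def CoBuchiAcc (A : DetAut σ Q) (F : Set Q) (w : ℕ → σ) : Prop :=
  ∃ n, ∀ m, n ≤ m → A.run w m ∉ F

/-- Colors occurring infinitely often in a run. -/
def infColors (κ : Q → ℕ) (r : ℕ → Q) : Set ℕ := { c | ∀ n, ∃ m, n ≤ m ∧ κ (r m) = c }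

/-- Parity (min-odd) acceptance. -/
def ParityAcc (A : DetAut σ Q) (κ : Q → ℕ) (w : ℕ → σ) : Prop :=
  ∃ c ∈ infColors κ (A.run w), (∀ c' ∈ infColors κ (A.run w), c ≤ c') ∧ Odd c

/-- `S` is strongly connected. -/
def IsSCC (A : DetAut σ Q) (S : Set Q) : Prop :=
  ∀ s1 ∈ S, ∀ s2 ∈ S, ∃ x : List σ, x ≠ [] ∧ A.runFin s1 x = s2

/-- Transitions taken infinitely often in the run on `w`. -/
def infTrans (A : DetAut σ Q) (w : ℕ → σ) : Set (Q × σ × Q) :=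
  { t | ∀ n, ∃ m, n ≤ m ∧ (A.run w m, w m, A.run w (m + 1)) = t }

/-- Transition-table (transition-based Muller) acceptance. -/
def TransAcc (A : DetAut σ Q) (acc : Set (Set (Q × σ × Q))) (w : ℕ → σ) : Prop :=
  infTrans A w ∈ acc

/-- Non-counting ω-language. -/
def NonCounting (L : Set (ℕ → σ)) : Prop :=
  ∃ n₀ : ℕ, ∀ n > n₀, ∀ u v : List σ, ∀ w : ℕ → σ,
    (wcat (u ++ wpow v n) w ∈ L ↔ wcat (u ++ wpow v (n + 1)) w ∈ L)

/-- `L` is respective of its right congruence. -/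
def Respective [Inhabited σ] (L : Set (ℕ → σ)) : Prop :=
  ∃ n₀ : ℕ, ∀ n > n₀, ∀ x u : List σ, u ≠ [] →
    wcat x (wrep u) ∈ L → RC L (x ++ wpow u n) (x ++ wpow u (n + 1))

/-!
Past some time `N` the run on `w` stays inside its infinity set `S`. Cut `w` at `N` and at a
later return `p` to the state at time `N`, chosen so late that every state of `S` occurs in
between. Since the run on `w[0..N) w[N..p)^ω` reaches the same state after `N` as after
`p` steps, it repeats the run on `w` over `[N, p)` forever, so its infinity set is the set of
states visited there, which is `S`.
-/

open Filter Set

lemma segment_length (w : ℕ → σ) (i j : ℕ) : (segment w i j).length = j - i := by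
  simp [segment]

lemma getElem_segment (w : ℕ → σ) (i j k : ℕ) (hk : k < (segment w i j).length) :
    (segment w i j)[k] = w (i + k) := by
  simp [segment]

lemma wcat_apply_of_lt (x : List σ) (w : ℕ → σ) {n : ℕ} (hn : n < x.length) :
    wcat x w n = x[n] := by
  simp [wcat, hn]

lemma wcat_length_add (x : List σ) (w : ℕ → σ) (n : ℕ) : wcat x w (x.length + n) = w n := by
  simp [wcat]

lemma wrep_apply [Inhabited σ] {v : List σ} (hv : v ≠ []) (n : ℕ) :
    wrep v n = v[n % v.length]'(Nat.mod_lt _ (List.length_pos_iff.2 hv)) :=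
  List.getD_eq_getElem _ _ _

lemma segment_ne_nil (w : ℕ → σ) {i j : ℕ} (hij : i < j) : segment w i j ≠ [] := by
  rw [← List.length_pos_iff, segment_length]
  omega

lemma wcat_segment_apply_of_lt (w y : ℕ → σ) {n i : ℕ} (hi : i < n) :
    wcat (segment w 0 n) y i = w i := by
  rw [wcat_apply_of_lt _ _ (by rwa [segment_length]), getElem_segment, zero_add]

lemma wcat_segment_apply_add (w y : ℕ → σ) (n k : ℕ) : wcat (segment w 0 n) y (n + k) = y k := by
  simpa [segment_length] using wcat_length_add (segment w 0 n) y k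

lemma wrep_segment_apply [Inhabited σ] (w : ℕ → σ) {i j : ℕ} (hij : i < j) (k : ℕ) :
    wrep (segment w i j) k = w (i + k % (j - i)) := by
  rw [wrep_apply (segment_ne_nil w hij), getElem_segment, segment_length]

section Runs

variable (A : DetAut σ Q)

lemma run_eq_of_forall_lt_eq {x w : ℕ → σ} {n : ℕ} (h : ∀ i < n, x i = w i) :
    A.run x n = A.run w n := by
  induction n with
  | zero => rfl
  | succ n ih => simp only [DetAut.run, ih fun i hi => h i (by omega), h n n.lt_succ_self]

lemma run_add_eq_run_add_mod {x w : ℕ → σ} {n p : ℕ} (hnp : n < p)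
    (hloop : A.run w p = A.run w n) (hpre : ∀ i < n, x i = w i)
    (hper : ∀ k, x (n + k) = w (n + k % (p - n))) (k : ℕ) :
    A.run x (n + k) = A.run w (n + k % (p - n)) := by
  set L := p - n
  induction k with
  | zero => simpa using run_eq_of_forall_lt_eq A hpre
  | succ k ih =>
    have hstep : A.run x (n + (k + 1)) = A.run w (n + k % L + 1) := by
      rw [← add_assoc, DetAut.run, ih, hper, ← DetAut.run]
    rw [hstep, ← Nat.mod_add_mod k L 1]
    have hmod := Nat.mod_lt k (show 0 < L by omega)
    rcases Nat.lt_or_ge (k % L + 1) L with hlt | hge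
    · rw [Nat.mod_eq_of_lt hlt, add_assoc]
    · have hwrap : k % L + 1 = L := by omega
      rw [hwrap, Nat.mod_self, add_zero, add_assoc, hwrap, Nat.add_sub_cancel' hnp.le, hloop]

end Runs

lemma mem_infSet_iff_frequently {r : ℕ → Q} {q : Q} :
    q ∈ infSet r ↔ ∃ᶠ m in atTop, r m = q :=
  frequently_atTop.symm

lemma eventually_mem_infSet [Finite Q] (r : ℕ → Q) : ∀ᶠ m in atTop, r m ∈ infSet r := by
  have hleave : ∀ q, ∀ᶠ m in atTop, q ∉ infSet r → r m ≠ q := fun q => by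
    by_cases hq : q ∈ infSet r
    · exact Eventually.of_forall fun _ h => absurd hq h
    · exact (not_frequently.1 (mt mem_infSet_iff_frequently.2 hq)).mono fun _ h _ => h
  filter_upwards [eventually_all.2 hleave] with m hm
  by_contra h
  exact hm _ h rfl

lemma exists_return_visiting_infSet [Finite Q] (r : ℕ → Q) {n : ℕ} (hn : r n ∈ infSet r) :
    ∃ p, n < p ∧ r p = r n ∧ infSet r ⊆ r '' Ico n p := by
  have hvisit : ∀ᶠ p in atTop, infSet r ⊆ r '' Ico n p := by
    refine eventually_all.2 fun q => ?_
    by_cases hq : q ∈ infSet r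
    · obtain ⟨j, hnj, rfl⟩ := hq n
      filter_upwards [eventually_gt_atTop j] with p hjp
      exact fun _ => ⟨j, ⟨hnj, hjp⟩, rfl⟩
    · exact Eventually.of_forall fun _ h => absurd h hq
  obtain ⟨p, ⟨hvisit, hnp⟩, hret⟩ :=
    ((hvisit.and (eventually_gt_atTop n)).and_frequently
      (mem_infSet_iff_frequently.1 hn)).exists
  exact ⟨p, hnp, hret, hvisit⟩

lemma infSet_eq_image_Ico {ρ r : ℕ → Q} {n L : ℕ} (hL : 0 < L)
    (h : ∀ k, ρ (n + k) = r (n + k % L)) : infSet ρ = r '' Ico n (n + L) := by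
  ext q
  constructor
  · intro hq
    obtain ⟨m, hnm, rfl⟩ := hq n
    have := Nat.mod_lt (m - n) hL
    exact ⟨n + (m - n) % L, ⟨by omega, by omega⟩, by rw [← h, Nat.add_sub_cancel' hnm]⟩
  · rintro ⟨j, ⟨hnj, hjL⟩, rfl⟩ N
    have := Nat.le_mul_of_pos_left N hL
    refine ⟨n + (L * N + (j - n)), by omega, ?_⟩
    rw [h, Nat.mul_add_mod, Nat.mod_eq_of_lt (by omega), Nat.add_sub_cancel' hnj]

/-- every word accepted by a DMA yields an accepted ultimately periodic
word with the same infinity set. -/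
theorem accepted_word_gives_up_witness {σ Q : Type*} [Inhabited σ] [Fintype Q]
    (A : DetAut σ Q) (acc : Set (Set Q)) (w : ℕ → σ) (hw : MullerAcc A acc w) :
    ∃ (u v : List σ), v ≠ [] ∧ MullerAcc A acc (wcat u (wrep v)) ∧
      infSet (A.run (wcat u (wrep v))) = infSet (A.run w) := by
  set r := A.run w
  obtain ⟨N, hN⟩ := eventually_atTop.1 (eventually_mem_infSet r)
  obtain ⟨p, hNp, hret, hvisit⟩ := exists_return_visiting_infSet r (hN N le_rfl)
  have hrun : ∀ k, A.run (wcat (segment w 0 N) (wrep (segment w N p))) (N + k) =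
      r (N + k % (p - N)) :=
    run_add_eq_run_add_mod A hNp hret (fun i hi => wcat_segment_apply_of_lt w _ hi)
      (fun k => by rw [wcat_segment_apply_add, wrep_segment_apply w hNp])
  have hinf : infSet (A.run (wcat (segment w 0 N) (wrep (segment w N p)))) = infSet r := by
    rw [infSet_eq_image_Ico (by omega) hrun, Nat.add_sub_cancel' hNp.le]
    exact Subset.antisymm (image_subset_iff.2 fun m hm => hN m hm.1) hvisit
  exact ⟨segment w 0 N, segment w N p, segment_ne_nil w hNp, by rwa [MullerAcc, hinf], hinf⟩

end OmegaRC
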